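/- For every π ∈ (0, 1) and all Δ, ε ∈ [0, 1], one has ψ_π(Δ) ≤ ψ_π(ε) if and only if Δ ≤ ε. -/

import Mathlib

open Real

/-- First branch of Gupta et al.'s helper function `f`. -/
noncomputable def g1 (V : ℝ) : ℝ := Real.log ((2 + V) / (2 - V)) - 2 * V / (2 + V)

/-- Gupta et al.'s helper function `f`. -/
noncomputable def f (V : ℝ) : ℝ := max (g1 V) (V ^ 2 / 2 + V ^ 4 / 36 + V ^ 6 / 288)

/-- Gupta et al.'s bound `ψ` for a binary sensitive attribute with `ℙ(S = 1) = p`. -/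
noncomputable def psi (p Δ : ℝ) : ℝ := (1 - p) * f (p * Δ) + p * f ((1 - p) * Δ)

/-! Both branches of `f` are strictly increasing on `[0, 2)` (the logarithmic one has derivative
`8V / ((2 - V)(2 + V)²)`), hence so is `f`; and `ψ_p` is a positive combination of `f` at the
rescalings `pΔ`, `(1 - p)Δ`, which stay in `[0, 1)` for `Δ ∈ [0, 1]`. -/

open Set

lemma hasDerivAt_g1 {x : ℝ} (hx₁ : -2 < x) (hx₂ : x < 2) :
    HasDerivAt g1 (8 * x / ((2 - x) * (2 + x) ^ 2)) x := by
  have hp : 2 + x ≠ 0 := by linarith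
  have hm : 2 - x ≠ 0 := by linarith
  have hnum : HasDerivAt (fun y : ℝ => 2 + y) 1 x := (hasDerivAt_id x).const_add 2
  have hden : HasDerivAt (fun y : ℝ => 2 - y) (-1) x := by
    simpa using (hasDerivAt_id x).const_sub 2
  have hlin : HasDerivAt (fun y : ℝ => 2 * y) 2 x := by
    simpa using (hasDerivAt_id x).const_mul 2
  refine (((hnum.div hden hm).log (div_ne_zero hp hm)).sub (hlin.div hnum hp)).congr_deriv ?_
  simp only [Pi.div_apply]
  field_simp
  ring

lemma g1_strictMonoOn : StrictMonoOn g1 (Ico 0 2) := by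
  have hcont : ContinuousOn g1 (Ico 0 2) := fun x hx =>
    (hasDerivAt_g1 (by linarith [hx.1]) hx.2).continuousAt.continuousWithinAt
  refine strictMonoOn_of_deriv_pos (convex_Ico 0 2) hcont fun x hx => ?_
  rw [interior_Ico] at hx
  rw [(hasDerivAt_g1 (by linarith [hx.1]) hx.2).deriv]
  have : 0 < 2 - x := by linarith [hx.2]
  have : 0 < 2 + x := by linarith [hx.1]
  exact div_pos (by linarith [hx.1]) (by positivity)

lemma strictMonoOn_even_poly :
    StrictMonoOn (fun V : ℝ => V ^ 2 / 2 + V ^ 4 / 36 + V ^ 6 / 288) (Ici 0) := by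
  intro a ha b hb hab
  have h2 := pow_left_strictMonoOn₀ (M₀ := ℝ) two_ne_zero ha hb hab
  have h4 := pow_left_strictMonoOn₀ (M₀ := ℝ) four_ne_zero ha hb hab
  have h6 := pow_left_strictMonoOn₀ (M₀ := ℝ) (by norm_num : 6 ≠ 0) ha hb hab
  dsimp only at h2 h4 h6 ⊢
  linarith

lemma f_strictMonoOn : StrictMonoOn f (Ico 0 2) := fun _ ha _ hb hab =>
  max_lt_max (g1_strictMonoOn ha hb hab)
    (strictMonoOn_even_poly (Ico_subset_Ici_self ha) (Ico_subset_Ici_self hb) hab)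

lemma f_mul_strictMonoOn {c : ℝ} (hc₀ : 0 < c) (hc₁ : c ≤ 1) :
    StrictMonoOn (fun Δ => f (c * Δ)) (Icc 0 1) :=
  f_strictMonoOn.comp ((strictMono_mul_left_of_pos hc₀).strictMonoOn _) fun Δ hΔ =>
    ⟨mul_nonneg hc₀.le hΔ.1, by nlinarith [hΔ.1, hΔ.2]⟩

lemma psi_strictMonoOn {p : ℝ} (hp₀ : 0 < p) (hp₁ : p < 1) : StrictMonoOn (psi p) (Icc 0 1) :=
  fun _ ha _ hb hab => add_lt_add
    (mul_lt_mul_of_pos_left (f_mul_strictMonoOn hp₀ hp₁.le ha hb hab) (sub_pos.2 hp₁))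
    (mul_lt_mul_of_pos_left (f_mul_strictMonoOn (sub_pos.2 hp₁) (by linarith) ha hb hab) hp₀)

/-- for every `p ∈ (0, 1)` and all `Δ, ε ∈ [0, 1]`,
`ψ_p(Δ) ≤ ψ_p(ε)` if and only if `Δ ≤ ε`. -/
theorem psi_le_psi_iff :
    ∀ p : ℝ, 0 < p → p < 1 →
      ∀ Δ ε : ℝ, 0 ≤ Δ → Δ ≤ 1 → 0 ≤ ε → ε ≤ 1 →
        (psi p Δ ≤ psi p ε ↔ Δ ≤ ε) :=
  fun _ hp₀ hp₁ _ _ hΔ₀ hΔ₁ hε₀ hε₁ =>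
    (psi_strictMonoOn hp₀ hp₁).le_iff_le ⟨hΔ₀, hΔ₁⟩ ⟨hε₀, hε₁⟩
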